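/- There do not exist real numbers k₀, l₁, l₂, l₃, q₁, q₂, q₃ and real numbers c < d such that the quadratic pseudo-Boolean function f(x₁,x₂,z) = k₀ + l₁x₁ + l₂x₂ + l₃z + q₁x₁x₂ + q₂x₁z + q₃x₂z satisfies f(x₁,x₂,z) = c whenever z = x₁ ⊙ x₂ (logical equivalence, i.e. z = 1 − x₁ − x₂ + 2x₁x₂) and f(x₁,x₂,z) ≥ d whenever z ≠ x₁ ⊙ x₂, for x₁, x₂, z ∈ {0,1}. -/
import Mathlib


/-- No quadratic (2-local) pseudo-Boolean function of three variables can take a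
constant value `c` exactly on the truth table of EQV (`z = x₁ ⊙ x₂`) while being
at least `d > c` off the truth table. -/
theorem eqv_not_two_local_realizable :
    ¬ ∃ (k₀ l₁ l₂ l₃ q₁ q₂ q₃ c d : ℝ), c < d ∧
      ∀ x₁ x₂ z : ℝ, (x₁ = 0 ∨ x₁ = 1) → (x₂ = 0 ∨ x₂ = 1) → (z = 0 ∨ z = 1) →
        ((z = 1 - x₁ - x₂ + 2 * x₁ * x₂ →
            k₀ + l₁ * x₁ + l₂ * x₂ + l₃ * z + q₁ * x₁ * x₂ + q₂ * x₁ * z + q₃ * x₂ * z = c) ∧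
         (z ≠ 1 - x₁ - x₂ + 2 * x₁ * x₂ →
            d ≤ k₀ + l₁ * x₁ + l₂ * x₂ + l₃ * z + q₁ * x₁ * x₂ + q₂ * x₁ * z + q₃ * x₂ * z)) := by
  rintro ⟨k₀, l₁, l₂, l₃, q₁, q₂, q₃, c, d, hcd, h⟩
  have h001 := (h 0 0 1 (Or.inl rfl) (Or.inl rfl) (Or.inr rfl)).1 (by norm_num)
  have h110 := (h 1 1 0 (Or.inr rfl) (Or.inr rfl) (Or.inl rfl)).2 (by norm_num)
  have h111 := (h 1 1 1 (Or.inr rfl) (Or.inr rfl) (Or.inr rfl)).1 (by norm_num)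
  have h100 := (h 1 0 0 (Or.inr rfl) (Or.inl rfl) (Or.inl rfl)).1 (by norm_num)
  have h010 := (h 0 1 0 (Or.inl rfl) (Or.inr rfl) (Or.inl rfl)).1 (by norm_num)
  have h011 := (h 0 1 1 (Or.inl rfl) (Or.inr rfl) (Or.inr rfl)).2 (by norm_num)
  have h101 := (h 1 0 1 (Or.inr rfl) (Or.inl rfl) (Or.inr rfl)).2 (by norm_num)
  have h000 := (h 0 0 0 (Or.inl rfl) (Or.inl rfl) (Or.inl rfl)).2 (by norm_num)
  ring_nf at h001 h110 h111 h100 h010 h011 h101 h000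
  linarith
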